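/- For any Banach spaces X and Y, the numerical index of the injective tensor product satisfies n(X ⊗̂_ε Y) ≤ min{ n(X), n(Y) }. -/

import Mathlib

open Metric Set

/-- The numerical radius of a bounded linear operator `T` on a normed space `X` over `𝕜`:
`v(T) = sup { ‖x*(Tx)‖ : x ∈ S_X, x* ∈ S_{X*}, x*(x) = 1 }`. -/
noncomputable def numRadius (𝕜 : Type*) [RCLike 𝕜] {X : Type*} [NormedAddCommGroup X]
    [NormedSpace 𝕜 X] (T : X →L[𝕜] X) : ℝ :=
  sSup {r : ℝ | ∃ (x : X) (f : X →L[𝕜] 𝕜), ‖x‖ = 1 ∧ ‖f‖ = 1 ∧ f x = 1 ∧ r = ‖f (T x)‖}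

/-- The numerical index of a normed space: `n(X) = inf { v(T) : T ∈ L(X), ‖T‖ = 1 }`. -/
noncomputable def numIndex (𝕜 : Type*) [RCLike 𝕜] (X : Type*) [NormedAddCommGroup X]
    [NormedSpace 𝕜 X] : ℝ :=
  sInf {r : ℝ | ∃ T : X →L[𝕜] X, ‖T‖ = 1 ∧ r = numRadius 𝕜 T}

/-- `v_δ(T)` computed with points taken in `A ⊆ B_X` and functionals in `B ⊆ B_{X*}`. -/
noncomputable def numRadiusDeltaOn (𝕜 : Type*) [RCLike 𝕜] {X : Type*} [NormedAddCommGroup X]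
    [NormedSpace 𝕜 X] (T : X →L[𝕜] X) (A : Set X) (B : Set (X →L[𝕜] 𝕜)) (δ : ℝ) : ℝ :=
  sSup {r : ℝ | ∃ x ∈ A, ∃ f ∈ B, 1 - δ < RCLike.re (f x) ∧ r = ‖f (T x)‖}

/-- `Z` (together with the bounded bilinear map `t`) is the projective tensor product
`X ⊗̂_π Y`: it is complete, elementary tensors have norm `‖x‖‖y‖`, and the closed unit
ball of `Z` is the closed convex hull of `B_X ⊗ B_Y`. -/
structure IsProjectiveTensorProduct (𝕜 : Type*) [RCLike 𝕜] {X Y Z : Type*}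
    [NormedAddCommGroup X] [NormedSpace 𝕜 X] [NormedAddCommGroup Y] [NormedSpace 𝕜 Y]
    [NormedAddCommGroup Z] [NormedSpace 𝕜 Z] [NormedSpace ℝ Z] [IsScalarTower ℝ 𝕜 Z]
    (t : X →L[𝕜] Y →L[𝕜] Z) : Prop where
  complete : CompleteSpace Z
  norm_tmul : ∀ x y, ‖t x y‖ = ‖x‖ * ‖y‖
  ball_eq : closedBall (0 : Z) 1 = closure (convexHull ℝ
      {z : Z | ∃ x ∈ closedBall (0 : X) 1, ∃ y ∈ closedBall (0 : Y) 1, z = t x y})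

/-- `Z` (together with the bounded bilinear map `t`) is the injective tensor product
`X ⊗̂_ε Y`: it is complete, the span of elementary tensors is dense, and on that span
the norm is the injective tensor norm. -/
structure IsInjectiveTensorProduct (𝕜 : Type*) [RCLike 𝕜] {X Y Z : Type*}
    [NormedAddCommGroup X] [NormedSpace 𝕜 X] [NormedAddCommGroup Y] [NormedSpace 𝕜 Y]
    [NormedAddCommGroup Z] [NormedSpace 𝕜 Z] (t : X →L[𝕜] Y →L[𝕜] Z) : Prop where
  complete : CompleteSpace Z
  dense_span : Dense (Submodule.span 𝕜 {z : Z | ∃ x y, z = t x y} : Set Z)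
  norm_sum : ∀ (n : ℕ) (x : Fin n → X) (y : Fin n → Y),
    ‖∑ i, t (x i) (y i)‖ = sSup {r : ℝ | ∃ (f : X →L[𝕜] 𝕜) (g : Y →L[𝕜] 𝕜),
      ‖f‖ ≤ 1 ∧ ‖g‖ ≤ 1 ∧ r = ‖∑ i, f (x i) * g (y i)‖}

/-- A slice of a bounded set `A`: `{a ∈ A : Re f(a) > sup Re f(A) - δ}`. -/
def sliceOf (𝕜 : Type*) [RCLike 𝕜] {X : Type*} [NormedAddCommGroup X] [NormedSpace 𝕜 X]
    (A : Set X) (f : X →L[𝕜] 𝕜) (δ : ℝ) : Set X :=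
  {a ∈ A | sSup {r : ℝ | ∃ b ∈ A, r = RCLike.re (f b)} - δ < RCLike.re (f a)}

/-- A set `A` is slicely countably determined (SCD) if there is a countable determining
family of slices of `A`: any `B ⊆ A` meeting every slice of the family has
closed convex hull containing `A`. -/
def IsSCD (𝕜 : Type*) [RCLike 𝕜] {X : Type*} [NormedAddCommGroup X] [NormedSpace 𝕜 X]
    [NormedSpace ℝ X] [IsScalarTower ℝ 𝕜 X] (A : Set X) : Prop :=
  ∃ V : ℕ → Set X, (∀ n, ∃ (f : X →L[𝕜] 𝕜) (δ : ℝ), 0 < δ ∧ V n = sliceOf 𝕜 A f δ) ∧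
    ∀ B ⊆ A, (∀ n, (B ∩ V n).Nonempty) → A ⊆ closure (convexHull ℝ B)

/-- The Daugavet property: `‖Id + T‖ = 1 + ‖T‖` for every rank-one operator `T`. -/
def DaugavetProperty (𝕜 : Type*) [RCLike 𝕜] (X : Type*) [NormedAddCommGroup X]
    [NormedSpace 𝕜 X] : Prop :=
  ∀ T : X →L[𝕜] X, (∃ (f : X →L[𝕜] 𝕜) (x₀ : X), ∀ x, T x = f x • x₀) →
    ‖ContinuousLinearMap.id 𝕜 X + T‖ = 1 + ‖T‖

/-!
The numerical radius is read off from the norms of the perturbations `Id + c T` as `c → 0`.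
For a state `(x, x*)` of `T` and a suitable phase of `c`, `‖Id + c T‖ ≥ 1 + ‖c‖ ‖x*(T x)‖`;
conversely `(Id - c S)(Id + c S) = Id - c² S²` and `‖(Id - c S) w‖ ≥ (1 - ‖c‖ v(S)) ‖w‖` give
`‖Id + c S‖ ≤ 1 + ‖c‖ v(S) + O(‖c‖²)`. For the injective norm, `R ↦ R ⊗ Id_Y` is a contraction
`L(X) → L(X ⊗̂_ε Y)` which is affine along `Id + c S` and preserves the norm of `S`, so
`v(S ⊗ Id_Y) ≤ v(S)` for every norm-one `S`. Hence `n(X ⊗̂_ε Y) ≤ n(X)`, and `≤ n(Y)` by symmetry.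
-/

open Filter Topology

section NumericalRadius

variable {𝕜 X Z : Type*} [RCLike 𝕜] [NormedAddCommGroup X] [NormedSpace 𝕜 X]
  [NormedAddCommGroup Z] [NormedSpace 𝕜 Z]

lemma numRadius_nonneg (T : X →L[𝕜] X) : 0 ≤ numRadius 𝕜 T :=
  Real.sSup_nonneg (by rintro _ ⟨x, f, -, -, -, rfl⟩; positivity)

lemma norm_apply_apply_le_opNorm (T : X →L[𝕜] X) {x : X} {f : X →L[𝕜] 𝕜} (hx : ‖x‖ = 1)
    (hf : ‖f‖ ≤ 1) : ‖f (T x)‖ ≤ ‖T‖ :=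
  calc ‖f (T x)‖ ≤ 1 * ‖T x‖ := f.le_of_opNorm_le hf (T x)
    _ ≤ ‖T‖ := by simpa [hx] using T.le_opNorm x

lemma norm_apply_le_numRadius (T : X →L[𝕜] X) {x : X} {f : X →L[𝕜] 𝕜} (hx : ‖x‖ = 1)
    (hf : ‖f‖ = 1) (hfx : f x = 1) : ‖f (T x)‖ ≤ numRadius 𝕜 T := by
  refine le_csSup ⟨‖T‖, ?_⟩ ⟨x, f, hx, hf, hfx, rfl⟩
  rintro r ⟨x, f, hx, hf, -, rfl⟩
  exact norm_apply_apply_le_opNorm T hx hf.le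

lemma norm_apply_le_numRadius_mul_norm (T : X →L[𝕜] X) {x : X} {f : X →L[𝕜] 𝕜}
    (hf : ‖f‖ = 1) (hfx : f x = ‖x‖) : ‖f (T x)‖ ≤ numRadius 𝕜 T * ‖x‖ := by
  rcases eq_or_ne x 0 with rfl | hx
  · simp
  have hx' : (‖x‖ : 𝕜) ≠ 0 := by simpa using hx
  have hunit := norm_apply_le_numRadius T (x := (‖x‖ : 𝕜)⁻¹ • x) (f := f)
    (by simp [norm_smul, hx]) hf (by simp [hfx, hx'])
  rw [map_smul, map_smul, norm_smul, norm_inv, RCLike.norm_ofReal, abs_norm] at hunit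
  rwa [inv_mul_le_iff₀ (norm_pos_iff.2 hx), mul_comm] at hunit

lemma mul_norm_le_norm_sub_smul_apply (T : X →L[𝕜] X) (c : 𝕜) (x : X) :
    (1 - ‖c‖ * numRadius 𝕜 T) * ‖x‖ ≤ ‖x - c • T x‖ := by
  rcases eq_or_ne x 0 with rfl | hx
  · simp
  obtain ⟨f, hf, hfx⟩ := exists_dual_vector 𝕜 x (norm_ne_zero_iff.2 hx)
  have hre : RCLike.re (f (x - c • T x)) = ‖x‖ - RCLike.re (c * f (T x)) := by
    simp [hfx]
  have h1 : RCLike.re (f (x - c • T x)) ≤ ‖x - c • T x‖ :=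
    (RCLike.re_le_norm _).trans (by simpa using f.le_of_opNorm_le hf.le (x - c • T x))
  have h2 : RCLike.re (c * f (T x)) ≤ ‖c‖ * (numRadius 𝕜 T * ‖x‖) :=
    (RCLike.re_le_norm _).trans (by
      rw [norm_mul]; gcongr; exact norm_apply_le_numRadius_mul_norm T hf hfx)
  nlinarith

lemma mul_norm_one_add_smul_le (T : X →L[𝕜] X) (c : 𝕜) :
    (1 - ‖c‖ * numRadius 𝕜 T) * ‖1 + c • T‖ ≤ 1 + ‖c‖ ^ 2 * ‖T‖ ^ 2 := by
  rcases le_or_gt (1 - ‖c‖ * numRadius 𝕜 T) 0 with hneg | hpos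
  · exact (mul_nonpos_of_nonpos_of_nonneg hneg (norm_nonneg _)).trans (by positivity)
  rw [← le_div_iff₀' hpos]
  refine (1 + c • T).opNorm_le_bound (by positivity) fun x => ?_
  rw [div_mul_eq_mul_div, le_div_iff₀' hpos]
  have hsq : (1 + c • T) x - c • T ((1 + c • T) x) = x - (c * c) • T (T x) := by
    simp only [add_apply, one_apply_eq_self, smul_apply, map_add, map_smul, smul_add, smul_smul]
    abel
  calc (1 - ‖c‖ * numRadius 𝕜 T) * ‖(1 + c • T) x‖
      ≤ ‖x - (c * c) • T (T x)‖ := hsq ▸ mul_norm_le_norm_sub_smul_apply T c _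
    _ ≤ ‖x‖ + ‖c‖ * ‖c‖ * (‖T‖ * (‖T‖ * ‖x‖)) := by
      grw [norm_sub_le, norm_smul, norm_mul, T.le_opNorm, T.le_opNorm]
    _ = (1 + ‖c‖ ^ 2 * ‖T‖ ^ 2) * ‖x‖ := by ring

lemma exists_one_add_mul_norm_le_norm_one_add_smul (T : X →L[𝕜] X) {x : X} {f : X →L[𝕜] 𝕜}
    (hx : ‖x‖ = 1) (hf : ‖f‖ = 1) (hfx : f x = 1) :
    ∃ u : 𝕜, ‖u‖ = 1 ∧ ∀ s : ℝ, 1 + s * ‖f (T x)‖ ≤ ‖1 + ((s : 𝕜) * u) • T‖ := by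
  obtain ⟨u, hu, hfTx⟩ := RCLike.exists_norm_eq_mul_self (f (T x))
  refine ⟨u, hu, fun s => ?_⟩
  have hval : f ((1 + ((s : 𝕜) * u) • T) x) = ((1 + s * ‖f (T x)‖ : ℝ) : 𝕜) := by
    simp [hfx, hfTx, mul_assoc]
  calc 1 + s * ‖f (T x)‖ = RCLike.re (f ((1 + ((s : 𝕜) * u) • T) x)) := by
        rw [hval, RCLike.ofReal_re]
    _ ≤ ‖f ((1 + ((s : 𝕜) * u) • T) x)‖ := RCLike.re_le_norm _
    _ ≤ ‖1 + ((s : 𝕜) * u) • T‖ := norm_apply_apply_le_opNorm _ hx hf.le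

lemma numRadius_le_numRadius_of_norm_one_add_smul_le (T : Z →L[𝕜] Z) (S : X →L[𝕜] X)
    (h : ∀ c : 𝕜, ‖1 + c • T‖ ≤ ‖1 + c • S‖) : numRadius 𝕜 T ≤ numRadius 𝕜 S := by
  set v := numRadius 𝕜 S
  have hv : 0 ≤ v := numRadius_nonneg S
  refine Real.sSup_le ?_ hv
  rintro _ ⟨z, φ, hz, hφ, hφz, rfl⟩
  set a := ‖φ (T z)‖
  obtain ⟨u, hu, hlow⟩ := exists_one_add_mul_norm_le_norm_one_add_smul T hz hφ hφz
  have hsmall : ∀ᶠ s in 𝓝[>] (0 : ℝ), a ≤ v + s * (v * a + ‖S‖ ^ 2) := by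
    filter_upwards [Ioo_mem_nhdsGT (show (0 : ℝ) < 1 / (v + 1) by positivity)]
      with s ⟨hs0, hs1⟩
    have hnorm : ‖(s : 𝕜) * u‖ = s := by simp [hu, hs0.le]
    have hsv : 0 ≤ 1 - s * v := by
      rw [lt_div_iff₀ (by positivity)] at hs1; nlinarith
    have hup := mul_norm_one_add_smul_le S ((s : 𝕜) * u)
    rw [hnorm] at hup
    have := mul_le_mul_of_nonneg_left ((hlow s).trans (h _)) hsv
    nlinarith
  have hlim : Tendsto (fun s : ℝ => v + s * (v * a + ‖S‖ ^ 2)) (𝓝[>] 0) (𝓝 v) := by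
    refine tendsto_nhdsWithin_of_tendsto_nhds ?_
    simpa using (tendsto_const_nhds (x := v)).add
      ((tendsto_id (x := 𝓝 (0 : ℝ))).mul_const (v * a + ‖S‖ ^ 2))
  exact ge_of_tendsto hlim hsmall

lemma numIndex_nonneg : 0 ≤ numIndex 𝕜 X :=
  Real.sInf_nonneg (by rintro _ ⟨T, -, rfl⟩; exact numRadius_nonneg T)

lemma numIndex_eq_zero_of_subsingleton [Subsingleton X] : numIndex 𝕜 X = 0 := by
  have : {r : ℝ | ∃ T : X →L[𝕜] X, ‖T‖ = 1 ∧ r = numRadius 𝕜 T} = ∅ := by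
    ext r
    simp [Subsingleton.elim _ (0 : X →L[𝕜] X)]
  rw [numIndex, this, Real.sInf_empty]

lemma numIndex_le_numRadius {T : X →L[𝕜] X} (hT : ‖T‖ = 1) : numIndex 𝕜 X ≤ numRadius 𝕜 T :=
  csInf_le ⟨0, by rintro _ ⟨T, -, rfl⟩; exact numRadius_nonneg T⟩ ⟨T, hT, rfl⟩

lemma numIndex_le_numIndex_of_forall_exists [Nontrivial X]
    (h : ∀ S : X →L[𝕜] X, ‖S‖ = 1 → ∃ T : Z →L[𝕜] Z, ‖T‖ = 1 ∧ numRadius 𝕜 T ≤ numRadius 𝕜 S) :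
    numIndex 𝕜 Z ≤ numIndex 𝕜 X := by
  refine le_csInf ⟨_, 1, norm_one, rfl⟩ ?_
  rintro _ ⟨S, hS, rfl⟩
  obtain ⟨T, hT, hTS⟩ := h S hS
  exact (numIndex_le_numRadius hT).trans hTS

end NumericalRadius

open scoped TensorProduct

section InjectiveTensorProduct

variable {𝕜 X Y Z : Type*} [RCLike 𝕜] [NormedAddCommGroup X] [NormedSpace 𝕜 X]
  [NormedAddCommGroup Y] [NormedSpace 𝕜 Y] [NormedAddCommGroup Z] [NormedSpace 𝕜 Z]

noncomputable def tensorLift (t : X →L[𝕜] Y →L[𝕜] Z) : X ⊗[𝕜] Y →ₗ[𝕜] Z :=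
  TensorProduct.lift ((ContinuousLinearMap.coeLM 𝕜).comp t.toLinearMap)

@[simp]
lemma tensorLift_tmul (t : X →L[𝕜] Y →L[𝕜] Z) (x : X) (y : Y) :
    tensorLift t (x ⊗ₜ y) = t x y := by
  simp [tensorLift]

/-- The operator `R ⊗ Id_Y`, extended by continuity from the algebraic tensor product. -/
noncomputable def mapLeft [CompleteSpace Z] (t : X →L[𝕜] Y →L[𝕜] Z) (R : X →L[𝕜] X) :
    Z →L[𝕜] Z :=
  (tensorLift t ∘ₗ TensorProduct.map R.toLinearMap LinearMap.id).extendOfNorm (tensorLift t)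

namespace IsInjectiveTensorProduct

variable {t : X →L[𝕜] Y →L[𝕜] Z} (ht : IsInjectiveTensorProduct 𝕜 t)
include ht

lemma norm_sum_apply_mul_apply_le {n : ℕ} (x : Fin n → X) (y : Fin n → Y) {f : X →L[𝕜] 𝕜}
    {g : Y →L[𝕜] 𝕜} (hf : ‖f‖ ≤ 1) (hg : ‖g‖ ≤ 1) :
    ‖∑ i, f (x i) * g (y i)‖ ≤ ‖∑ i, t (x i) (y i)‖ := by
  rw [ht.norm_sum]
  refine le_csSup ⟨∑ i, ‖x i‖ * ‖y i‖, ?_⟩ ⟨f, g, hf, hg, rfl⟩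
  rintro _ ⟨f, g, hf, hg, rfl⟩
  refine (norm_sum_le _ _).trans (Finset.sum_le_sum fun i _ => ?_)
  rw [norm_mul]
  gcongr
  · simpa using f.le_of_opNorm_le hf (x i)
  · simpa using g.le_of_opNorm_le hg (y i)

lemma norm_sum_le_of_forall {n : ℕ} (x : Fin n → X) (y : Fin n → Y) {C : ℝ} (hC : 0 ≤ C)
    (h : ∀ (f : X →L[𝕜] 𝕜) (g : Y →L[𝕜] 𝕜), ‖f‖ ≤ 1 → ‖g‖ ≤ 1 →
      ‖∑ i, f (x i) * g (y i)‖ ≤ C) :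
    ‖∑ i, t (x i) (y i)‖ ≤ C := by
  rw [ht.norm_sum]
  exact Real.sSup_le (by rintro _ ⟨f, g, hf, hg, rfl⟩; exact h f g hf hg) hC

lemma norm_tmul (x : X) (y : Y) : ‖t x y‖ = ‖x‖ * ‖y‖ := by
  refine le_antisymm ?_ ?_
  · simpa using ht.norm_sum_le_of_forall ![x] ![y] (by positivity) fun f g hf hg => by
      simpa [norm_mul] using mul_le_mul (f.le_of_opNorm_le hf x) (g.le_of_opNorm_le hg y)
        (norm_nonneg _) (by positivity)
  · obtain ⟨f, hf, hfx⟩ := exists_dual_vector'' 𝕜 x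
    obtain ⟨g, hg, hgy⟩ := exists_dual_vector'' 𝕜 y
    simpa [hfx, hgy] using ht.norm_sum_apply_mul_apply_le ![x] ![y] hf hg

lemma norm_sum_map_le (R : X →L[𝕜] X) {n : ℕ} (x : Fin n → X) (y : Fin n → Y) :
    ‖∑ i, t (R (x i)) (y i)‖ ≤ ‖R‖ * ‖∑ i, t (x i) (y i)‖ := by
  refine ht.norm_sum_le_of_forall _ y (by positivity) fun f g hf hg => ?_
  rcases eq_or_ne R 0 with rfl | hR
  · simp
  have hR' : 0 < ‖R‖ := norm_pos_iff.2 hR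
  have hf' : ‖(‖R‖⁻¹ : 𝕜) • f.comp R‖ ≤ 1 := by
    rw [norm_smul, norm_inv, RCLike.norm_ofReal, abs_norm, inv_mul_le_iff₀ hR', mul_one]
    exact (f.opNorm_comp_le R).trans (by simpa using mul_le_mul_of_nonneg_right hf hR'.le)
  have hsum : ∑ i, f (R (x i)) * g (y i) =
      (‖R‖ : 𝕜) * ∑ i, ((‖R‖⁻¹ : 𝕜) • f.comp R) (x i) * g (y i) := by
    have : (‖R‖ : 𝕜) ≠ 0 := by simpa using hR
    simp [Finset.mul_sum, ← mul_assoc, mul_inv_cancel₀ this]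
  rw [hsum, norm_mul, RCLike.norm_ofReal, abs_norm]
  exact mul_le_mul_of_nonneg_left (ht.norm_sum_apply_mul_apply_le x y hf' hg) hR'.le

lemma denseRange_tensorLift : DenseRange (tensorLift t) := by
  have : Submodule.span 𝕜 {z : Z | ∃ x y, z = t x y} ≤ LinearMap.range (tensorLift t) :=
    Submodule.span_le.2 (by rintro _ ⟨x, y, rfl⟩; exact ⟨x ⊗ₜ y, by simp⟩)
  exact ht.dense_span.mono this

lemma norm_tensorLift_map_le (R : X →L[𝕜] X) (u : X ⊗[𝕜] Y) :
    ‖(tensorLift t ∘ₗ TensorProduct.map R.toLinearMap LinearMap.id) u‖ ≤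
      ‖R‖ * ‖tensorLift t u‖ := by
  obtain ⟨s, rfl⟩ := TensorProduct.exists_finset u
  rw [← s.sum_coe_sort, ← s.equivFin.symm.sum_comp]
  simpa using ht.norm_sum_map_le R (fun i => (s.equivFin.symm i : X × Y).1)
    (fun i => (s.equivFin.symm i : X × Y).2)

lemma exists_tmul_ne_zero [Nontrivial Z] : ∃ x y, t x y ≠ 0 := by
  by_contra! h
  exact one_ne_zero (ContinuousLinearMap.ext_on ht.dense_span (f := (1 : Z →L[𝕜] Z)) (g := 0)
    (by rintro _ ⟨x, y, rfl⟩; simp [h]))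

lemma flip : IsInjectiveTensorProduct 𝕜 t.flip where
  complete := ht.complete
  dense_span := by
    convert ht.dense_span using 6
    exact exists_comm
  norm_sum n y x := by
    simp only [ContinuousLinearMap.flip_apply, ht.norm_sum n x y]
    congr 1
    ext r
    constructor <;> rintro ⟨f, g, hf, hg, rfl⟩ <;> exact ⟨g, f, hg, hf, by simp [mul_comm]⟩

section Complete

variable [CompleteSpace Z]

lemma mapLeft_tmul (R : X →L[𝕜] X) (x : X) (y : Y) : mapLeft t R (t x y) = t (R x) y := by
  have := LinearMap.extendOfNorm_eq ht.denseRange_tensorLift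
    ⟨‖R‖, ht.norm_tensorLift_map_le R⟩ (x ⊗ₜ y)
  rwa [tensorLift_tmul, LinearMap.comp_apply, TensorProduct.map_tmul, tensorLift_tmul] at this

lemma norm_mapLeft_le (R : X →L[𝕜] X) : ‖mapLeft t R‖ ≤ ‖R‖ :=
  LinearMap.opNorm_extendOfNorm_le ht.denseRange_tensorLift (norm_nonneg R)
    (ht.norm_tensorLift_map_le R)

lemma mapLeft_one_add_smul (R : X →L[𝕜] X) (c : 𝕜) :
    mapLeft t (1 + c • R) = 1 + c • mapLeft t R :=
  ContinuousLinearMap.ext_on ht.dense_span (by rintro _ ⟨x, y, rfl⟩; simp [ht.mapLeft_tmul])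

lemma norm_le_norm_mapLeft (R : X →L[𝕜] X) {y : Y} (hy : y ≠ 0) : ‖R‖ ≤ ‖mapLeft t R‖ := by
  refine R.opNorm_le_bound (norm_nonneg _) fun x => ?_
  have := (mapLeft t R).le_opNorm (t x y)
  rw [ht.mapLeft_tmul, ht.norm_tmul, ht.norm_tmul, ← mul_assoc] at this
  exact le_of_mul_le_mul_right this (norm_pos_iff.2 hy)

end Complete

lemma numIndex_le_left : numIndex 𝕜 Z ≤ numIndex 𝕜 X := by
  rcases subsingleton_or_nontrivial Z with hZ | hZ
  · rw [numIndex_eq_zero_of_subsingleton]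
    exact numIndex_nonneg
  have := ht.complete
  obtain ⟨x, y, hxy⟩ := ht.exists_tmul_ne_zero
  have : Nontrivial X := ⟨x, 0, by rintro rfl; simp at hxy⟩
  have hy : y ≠ 0 := by rintro rfl; simp at hxy
  refine numIndex_le_numIndex_of_forall_exists fun S hS => ⟨mapLeft t S, ?_, ?_⟩
  · exact le_antisymm (hS ▸ ht.norm_mapLeft_le S) (hS ▸ ht.norm_le_norm_mapLeft S hy)
  · refine numRadius_le_numRadius_of_norm_one_add_smul_le _ _ fun c => ?_
    rw [← ht.mapLeft_one_add_smul]
    exact ht.norm_mapLeft_le _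

end IsInjectiveTensorProduct

end InjectiveTensorProduct

theorem numIndex_injectiveTensorProduct_le_min_general {𝕜 X Y Z : Type*} [RCLike 𝕜]
    [NormedAddCommGroup X] [NormedSpace 𝕜 X]
    [NormedAddCommGroup Y] [NormedSpace 𝕜 Y]
    [NormedAddCommGroup Z] [NormedSpace 𝕜 Z]
    (t : X →L[𝕜] Y →L[𝕜] Z) (ht : IsInjectiveTensorProduct 𝕜 t) :
    numIndex 𝕜 Z ≤ min (numIndex 𝕜 X) (numIndex 𝕜 Y) :=
  le_min ht.numIndex_le_left ht.flip.numIndex_le_left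

/-- `n(X ⊗̂_ε Y) ≤ min{n(X), n(Y)}`. -/
theorem numIndex_injectiveTensorProduct_le_min {𝕜 X Y Z : Type*} [RCLike 𝕜]
    [NormedAddCommGroup X] [NormedSpace 𝕜 X] [CompleteSpace X]
    [NormedAddCommGroup Y] [NormedSpace 𝕜 Y] [CompleteSpace Y]
    [NormedAddCommGroup Z] [NormedSpace 𝕜 Z]
    (t : X →L[𝕜] Y →L[𝕜] Z) (ht : IsInjectiveTensorProduct 𝕜 t) :
    numIndex 𝕜 Z ≤ min (numIndex 𝕜 X) (numIndex 𝕜 Y) :=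
  numIndex_injectiveTensorProduct_le_min_general t ht
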